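/- arXiv:2202.05192 — 2 statements merged into one kernel-verified Lean document; each statement's English description precedes it below -/
import Mathlib

section
/- Let y and z be von Mises–Fisher random vectors on S_p with parameters (κ_y, μ_y) and (κ_z, μ_z), let α ∈ (0,1)∪(1,∞), and suppose κ_α = ‖ακ_y μ_y + (1−α)κ_z μ_z‖₂ = 0. Then the Rényi divergence of order α of y from z equals d_α(y,z) = (ν/(α−1))·ln(κ_y^α κ_z^{1−α}/2) + (α/(α−1))·ln((1/Γ(ν+1))/I_ν(κ_y)) − ln((1/Γ(ν+1))/I_ν(κ_z)). -/
open MeasureTheory Real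
open scoped RealInnerProductSpace

/-- `ν = p/2 − 1`. -/
noncomputable def nuOf (p : ℕ) : ℝ := (p : ℝ) / 2 - 1

/-- The modified Bessel function of the first kind,
`I_ν(z) = (z/2)^ν ∑_{k=0}^∞ (z/2)^{2k}/(k!·Γ(ν+k+1))`. -/
noncomputable def besselI (ν z : ℝ) : ℝ :=
  (z / 2) ^ ν * ∑' k : ℕ, (z / 2) ^ (2 * k) / (Nat.factorial k * Real.Gamma (ν + k + 1))

/-- The ratio of modified Bessel functions `r_ν(κ) = I_{ν+1}(κ)/I_ν(κ)`. -/
noncomputable def besselRatio (ν κ : ℝ) : ℝ := besselI (ν + 1) κ / besselI ν κ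

/-- The standard surface measure on the unit sphere in `ℝ^p`. -/
noncomputable def sphereMeasure (p : ℕ) :
    Measure (Metric.sphere (0 : EuclideanSpace ℝ (Fin p)) 1) :=
  (volume : Measure (EuclideanSpace ℝ (Fin p))).toSphere

/-- The von Mises–Fisher partition function `C_ν(κ) = (2π)^{ν+1} I_ν(κ)/κ^ν`. -/
noncomputable def vmfC (ν κ : ℝ) : ℝ := (2 * Real.pi) ^ (ν + 1) * besselI ν κ / κ ^ ν

/-- The von Mises–Fisher density `f_p(x;κ,μ) = exp(κ⟨μ,x⟩)/C_ν(κ)`. -/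
noncomputable def vmf (p : ℕ) (κ : ℝ) (μ x : EuclideanSpace ℝ (Fin p)) : ℝ :=
  Real.exp (κ * ⟪μ, x⟫) / vmfC (nuOf p) κ

/-- The uniform density on the unit sphere in `ℝ^p`, `u(x) = Γ(ν+1)/(2π^{ν+1})`. -/
noncomputable def uniformDensity (p : ℕ) : ℝ :=
  Real.Gamma (nuOf p + 1) / (2 * Real.pi ^ (nuOf p + 1))

/-- The Rényi divergence of order `α` of `f_p(·;κ_y,μ_y)` from `f_p(·;κ_z,μ_z)`. -/
noncomputable def renyiDiv (p : ℕ) (α κy κz : ℝ) (μy μz : EuclideanSpace ℝ (Fin p)) : ℝ :=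
  (1 / (α - 1)) * Real.log (∫ x : Metric.sphere (0 : EuclideanSpace ℝ (Fin p)) 1,
      vmf p κy μy (x : EuclideanSpace ℝ (Fin p)) ^ α
        * vmf p κz μz (x : EuclideanSpace ℝ (Fin p)) ^ (1 - α) ∂(sphereMeasure p))

/-! When `κ_α = 0` the exponents of `f_p(·;κ_y,μ_y)^α f_p(·;κ_z,μ_z)^{1-α}` cancel, so the
integrand is the constant `C_ν(κ_y)^{-α} C_ν(κ_z)^{α-1}` and the integral is this constant times
the area `2π^{ν+1}/Γ(ν+1)` of the sphere. The formula then follows by expanding logarithms; they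
are all of positive numbers because `I_ν(κ) > 0`, its series being dominated by that of `exp`. -/

open scoped Nat

lemma factorial_mul_Gamma_add_one_le {ν : ℝ} (hν : 0 ≤ ν) (k : ℕ) :
    (k ! : ℝ) * Gamma (ν + 1) ≤ Gamma (ν + k + 1) := by
  induction k with
  | zero => simp
  | succ k ih =>
    have hk : (0 : ℝ) < ν + k + 1 := by positivity
    calc ((k + 1)! : ℝ) * Gamma (ν + 1) = (k + 1) * ((k ! : ℝ) * Gamma (ν + 1)) := by
          push_cast [Nat.factorial_succ]; ring
      _ ≤ (ν + k + 1) * Gamma (ν + k + 1) := by gcongr; linarith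
      _ = Gamma (ν + ↑(k + 1) + 1) := by
          rw [← Gamma_add_one hk.ne']; push_cast; ring_nf

lemma summable_besselI_series {ν : ℝ} (hν : 0 ≤ ν) (z : ℝ) :
    Summable fun k : ℕ => (z / 2) ^ (2 * k) / (k ! * Gamma (ν + k + 1)) := by
  have hΓ : 0 < Gamma (ν + 1) := Gamma_pos_of_pos (by linarith)
  refine .of_nonneg_of_le (fun k => ?_) (fun k => ?_)
    ((summable_pow_div_factorial ((z / 2) ^ 2)).div_const (Gamma (ν + 1)))
  · have := Gamma_pos_of_pos (by positivity : 0 < ν + k + 1)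
    rw [pow_mul]; positivity
  · have hΓk : Gamma (ν + 1) ≤ Gamma (ν + k + 1) :=
      (le_mul_of_one_le_left hΓ.le (mod_cast k.factorial_pos)).trans
        (factorial_mul_Gamma_add_one_le hν k)
    rw [pow_mul, div_div]
    gcongr

lemma besselI_pos {ν z : ℝ} (hν : 0 ≤ ν) (hz : 0 < z) : 0 < besselI ν z := by
  refine mul_pos (rpow_pos_of_pos (by positivity) ν)
    ((summable_besselI_series hν z).tsum_pos (fun k => ?_) 0 ?_)
  · have := Gamma_pos_of_pos (by positivity : 0 < ν + k + 1)
    rw [pow_mul]; positivity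
  · simpa using Gamma_pos_of_pos (by linarith : 0 < ν + 1)

lemma vmfC_pos {ν κ : ℝ} (hν : 0 ≤ ν) (hκ : 0 < κ) : 0 < vmfC ν κ := by
  have := besselI_pos hν hκ
  unfold vmfC; positivity

lemma log_vmfC {ν κ : ℝ} (hν : 0 ≤ ν) (hκ : 0 < κ) :
    log (vmfC ν κ) = (ν + 1) * log (2 * π) + log (besselI ν κ) - ν * log κ := by
  have := besselI_pos hν hκ
  rw [vmfC, log_div (by positivity) (by positivity), log_mul (by positivity) (by positivity),
    log_rpow (by positivity), log_rpow hκ]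

lemma volume_toSphere_real_univ {E : Type*} [NormedAddCommGroup E] [InnerProductSpace ℝ E]
    [FiniteDimensional ℝ E] [MeasurableSpace E] [BorelSpace E] [Nontrivial E] :
    (volume : Measure E).toSphere.real Set.univ
      = 2 * π ^ ((Module.finrank ℝ E : ℝ) / 2) / Gamma ((Module.finrank ℝ E : ℝ) / 2) := by
  have hn : (0 : ℝ) < Module.finrank ℝ E := mod_cast Module.finrank_pos
  have hΓ := Gamma_pos_of_pos (half_pos hn)
  have hsqrt : √π ^ Module.finrank ℝ E = π ^ ((Module.finrank ℝ E : ℝ) / 2) := by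
    rw [sqrt_eq_rpow, ← rpow_natCast, ← rpow_mul pi_pos.le]; ring_nf
  rw [Measure.toSphere_real_apply_univ, measureReal_def, InnerProductSpace.volume_ball,
    ENNReal.ofReal_one, one_pow, one_mul, ENNReal.toReal_ofReal (by positivity), hsqrt,
    Gamma_add_one (by positivity)]
  field_simp

lemma nuOf_nonneg {p : ℕ} (hp : 2 ≤ p) : 0 ≤ nuOf p := by
  have : (2 : ℝ) ≤ p := mod_cast hp
  rw [nuOf]; linarith

lemma sphereMeasure_real_univ {p : ℕ} (hp : 1 ≤ p) :
    (sphereMeasure p).real Set.univ = 2 * π ^ (nuOf p + 1) / Gamma (nuOf p + 1) := by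
  have : Nonempty (Fin p) := ⟨⟨0, hp⟩⟩
  rw [sphereMeasure, volume_toSphere_real_univ, finrank_euclideanSpace_fin, nuOf, sub_add_cancel]

lemma vmf_rpow_mul_vmf_rpow {p : ℕ} {κy κz : ℝ} (hCy : 0 ≤ vmfC (nuOf p) κy)
    (hCz : 0 ≤ vmfC (nuOf p) κz) (α : ℝ) (μy μz x : EuclideanSpace ℝ (Fin p)) :
    vmf p κy μy x ^ α * vmf p κz μz x ^ (1 - α)
      = exp ⟪(α * κy) • μy + ((1 - α) * κz) • μz, x⟫
        / (vmfC (nuOf p) κy ^ α * vmfC (nuOf p) κz ^ (1 - α)) := by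
  rw [vmf, vmf, div_rpow (exp_pos _).le hCy, div_rpow (exp_pos _).le hCz, ← exp_mul, ← exp_mul,
    inner_add_left, real_inner_smul_left, real_inner_smul_left, ← mul_div_mul_comm, ← exp_add]
  ring_nf

lemma renyiDiv_eq_of_smul_add_smul_eq_zero {p : ℕ} (hp : 1 ≤ p) {α κy κz : ℝ}
    (hCy : 0 ≤ vmfC (nuOf p) κy) (hCz : 0 ≤ vmfC (nuOf p) κz) {μy μz : EuclideanSpace ℝ (Fin p)}
    (h : (α * κy) • μy + ((1 - α) * κz) • μz = 0) :
    renyiDiv p α κy κz μy μz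
      = 1 / (α - 1) * log (2 * π ^ (nuOf p + 1) / Gamma (nuOf p + 1)
          / (vmfC (nuOf p) κy ^ α * vmfC (nuOf p) κz ^ (1 - α))) := by
  simp_rw [renyiDiv, vmf_rpow_mul_vmf_rpow hCy hCz, h, inner_zero_left, exp_zero,
    integral_const, sphereMeasure_real_univ hp, smul_eq_mul, mul_one_div]

theorem renyi_divergence_vmf_degenerate_general (p : ℕ) (hp : 2 ≤ p) (α : ℝ) (hα1 : α ≠ 1)
    (κy κz : ℝ) (hκy : 0 < κy) (hκz : 0 < κz)
    (μy μz : EuclideanSpace ℝ (Fin p))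
    (hκα : ‖(α * κy) • μy + ((1 - α) * κz) • μz‖ = 0) :
    renyiDiv p α κy κz μy μz
      = nuOf p / (α - 1) * Real.log (κy ^ α * κz ^ (1 - α) / 2)
        + α / (α - 1) * Real.log ((1 / Real.Gamma (nuOf p + 1)) / besselI (nuOf p) κy)
        - Real.log ((1 / Real.Gamma (nuOf p + 1)) / besselI (nuOf p) κz) := by
  have hν := nuOf_nonneg hp
  have hΓ : 0 < Gamma (nuOf p + 1) := Gamma_pos_of_pos (by linarith)
  have hIy := besselI_pos hν hκy
  have hIz := besselI_pos hν hκz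
  have hCy := vmfC_pos hν hκy
  have hCz := vmfC_pos hν hκz
  rw [renyiDiv_eq_of_smul_add_smul_eq_zero (by omega) hCy.le hCz.le (norm_eq_zero.mp hκα),
    log_div (by positivity) (by positivity), log_div (by positivity) hΓ.ne',
    log_mul (by positivity) (by positivity), log_mul (by positivity) (by positivity),
    log_rpow hCy, log_rpow hCz, log_vmfC hν hκy, log_vmfC hν hκz,
    log_mul two_ne_zero pi_pos.ne', log_div (by positivity) two_ne_zero,
    log_mul (by positivity) (by positivity), log_rpow hκy, log_rpow hκz,
    log_div (by positivity) hIy.ne', log_div (by positivity) hIz.ne', log_rpow pi_pos,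
    one_div (Gamma _), log_inv]
  field_simp [sub_ne_zero.mpr hα1]
  ring

/-- Rényi divergence between two von Mises–Fisher distributions in the special
case `κ_α = 0`. -/
theorem renyi_divergence_vmf_degenerate (p : ℕ) (hp : 2 ≤ p) (α : ℝ) (hα : 0 < α) (hα1 : α ≠ 1)
    (κy κz : ℝ) (hκy : 0 < κy) (hκz : 0 < κz)
    (μy μz : EuclideanSpace ℝ (Fin p)) (hμy : ‖μy‖ = 1) (hμz : ‖μz‖ = 1)
    (hκα : ‖(α * κy) • μy + ((1 - α) * κz) • μz‖ = 0) :
    renyiDiv p α κy κz μy μz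
      = nuOf p / (α - 1) * Real.log (κy ^ α * κz ^ (1 - α) / 2)
        + α / (α - 1) * Real.log ((1 / Real.Gamma (nuOf p + 1)) / besselI (nuOf p) κy)
        - Real.log ((1 / Real.Gamma (nuOf p + 1)) / besselI (nuOf p) κz) :=
  renyi_divergence_vmf_degenerate_general p hp α hα1 κy κz hκy hκz μy μz hκα
end

section
/- For every κ > 0, |ln(I_ν(κ))| ≤ (κ − (1/2)·ln(κ))·(1 + (max(1, 2ν)·ln(2) + 2·ln(Γ(ν+1)) + max(2c̄_ν, 2c̲_ν·ln(c̲_ν)))/(1 + ln(2))); in particular ln(I_ν(κ)) is an O(κ − ln(κ)/2) function as κ → ∞. -/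
/-!
The series of `I_ν(κ)` is squeezed between its first term and a multiple of `cosh κ`: since
`k! Γ(ν+1) ≤ Γ(ν+k+1)` and `(2k)! ≤ 4^k (k!)²`, its `k`-th term is at most
`κ^{2k} / ((2k)! Γ(ν+1))`. Hence `log I_ν(κ)` lies between `ν log(κ/2) - log Γ(ν+1)` and
`ν log(κ/2) + κ - log Γ(ν+1)`. Both bounds are absorbed into a multiple of `κ - (log κ)/2`,
which is at least `(1 + log 2)/2` and dominates `(κ + 1)/2`; what remains are elementary
estimates on the constant, the only transcendental ones being `log Γ(ν+1) ≥ -1/2` and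
`x log x ≥ (x - 1)(1 + log 2)` for `x = c̲_ν` large.
-/

open Real

/-- `c̲_ν = ν + 1/2`. -/
noncomputable def cLow (ν : ℝ) : ℝ := ν + 1 / 2

/-- `c̄_ν = ν + 3/2`. -/
noncomputable def cHigh (ν : ℝ) : ℝ := ν + 3 / 2

open scoped Nat

noncomputable def besselITerm (ν z : ℝ) (k : ℕ) : ℝ :=
  (z / 2) ^ (2 * k) / (k ! * Gamma (ν + k + 1))

theorem besselI_eq_mul_tsum (ν z : ℝ) :
    besselI ν z = (z / 2) ^ ν * ∑' k, besselITerm ν z k := rfl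

theorem factorial_mul_Gamma_le_Gamma_add {ν : ℝ} (hν : 0 ≤ ν) (k : ℕ) :
    k ! * Gamma (ν + 1) ≤ Gamma (ν + k + 1) := by
  induction k with
  | zero => simp
  | succ k ih =>
    have hpos : 0 < ν + k + 1 := by positivity
    calc ((k + 1 : ℕ)! : ℝ) * Gamma (ν + 1) = (k + 1) * (k ! * Gamma (ν + 1)) := by
          push_cast [Nat.factorial_succ]; ring
      _ ≤ (ν + k + 1) * Gamma (ν + k + 1) := by
          gcongr
          linarith
      _ = Gamma (ν + (k + 1 : ℕ) + 1) := by
          rw [← Gamma_add_one hpos.ne']; push_cast; ring_nf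

theorem factorial_two_mul_le (k : ℕ) : (2 * k)! ≤ 4 ^ k * (k ! * k !) :=
  calc (2 * k)! = k.centralBinom * (k ! * k !) := by
        rw [Nat.centralBinom_eq_two_mul_choose, two_mul,
          ← Nat.add_choose_mul_factorial_mul_factorial, mul_assoc]
    _ ≤ 4 ^ k * (k ! * k !) := Nat.mul_le_mul_right _ (Nat.centralBinom_le_four_pow k)

section

variable {ν : ℝ}

theorem besselITerm_pos (hν : 0 ≤ ν) {z : ℝ} (hz : 0 < z) (k : ℕ) : 0 < besselITerm ν z k := by
  unfold besselITerm
  have := Gamma_pos_of_pos (by positivity : 0 < ν + k + 1)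
  positivity

theorem besselITerm_le (hν : 0 ≤ ν) (z : ℝ) (k : ℕ) :
    besselITerm ν z k ≤ z ^ (2 * k) / (2 * k)! / Gamma (ν + 1) := by
  have hΓ := Gamma_pos_of_pos (by positivity : 0 < ν + 1)
  have hz : (z / 2) ^ (2 * k) = z ^ (2 * k) / 4 ^ k := by
    rw [div_pow, pow_mul (2 : ℝ)]; norm_num
  rw [besselITerm, hz, div_div, div_div]
  apply div_le_div_of_nonneg_left ((even_two_mul k).pow_nonneg z) (by positivity)
  calc ((2 * k)! : ℝ) * Gamma (ν + 1) ≤ 4 ^ k * (k ! * (k ! * Gamma (ν + 1))) := by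
        rw [← mul_assoc (k ! : ℝ), ← mul_assoc]
        gcongr
        exact_mod_cast factorial_two_mul_le k
    _ ≤ 4 ^ k * (k ! * Gamma (ν + k + 1)) := by
        gcongr
        exact factorial_mul_Gamma_le_Gamma_add hν k

theorem summable_besselITerm (hν : 0 ≤ ν) {z : ℝ} (hz : 0 < z) : Summable (besselITerm ν z) :=
  .of_nonneg_of_le (fun k ↦ (besselITerm_pos hν hz k).le) (besselITerm_le hν z)
    ((hasSum_cosh z).summable.div_const _)

theorem inv_Gamma_le_tsum_besselITerm (hν : 0 ≤ ν) {z : ℝ} (hz : 0 < z) :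
    (Gamma (ν + 1))⁻¹ ≤ ∑' k, besselITerm ν z k := by
  simpa [besselITerm] using
    (summable_besselITerm hν hz).le_tsum 0 (fun k _ ↦ (besselITerm_pos hν hz k).le)

theorem tsum_besselITerm_le (hν : 0 ≤ ν) {z : ℝ} (hz : 0 < z) :
    ∑' k, besselITerm ν z k ≤ exp z / Gamma (ν + 1) := by
  have hΓ := Gamma_pos_of_pos (by positivity : 0 < ν + 1)
  calc ∑' k, besselITerm ν z k ≤ cosh z / Gamma (ν + 1) :=
        (hasSum_cosh z).div_const _ |>.tsum_eq ▸
          (summable_besselITerm hν hz).tsum_le_tsum (besselITerm_le hν z)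
            ((hasSum_cosh z).summable.div_const _)
    _ ≤ exp z / Gamma (ν + 1) := by
        gcongr
        rw [cosh_eq]
        linarith [exp_le_exp.mpr (by linarith : -z ≤ z)]

theorem le_log_besselI (hν : 0 ≤ ν) {z : ℝ} (hz : 0 < z) :
    ν * log (z / 2) - log (Gamma (ν + 1)) ≤ log (besselI ν z) := by
  have hΓ := Gamma_pos_of_pos (by positivity : 0 < ν + 1)
  have hS := inv_Gamma_le_tsum_besselITerm hν hz
  rw [besselI_eq_mul_tsum, log_mul (by positivity) (hS.trans_lt' (by positivity)).ne',
    log_rpow (by positivity), sub_eq_add_neg, ← log_inv]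
  gcongr

theorem log_besselI_le (hν : 0 ≤ ν) {z : ℝ} (hz : 0 < z) :
    log (besselI ν z) ≤ ν * log (z / 2) + z - log (Gamma (ν + 1)) := by
  have hΓ := Gamma_pos_of_pos (by positivity : 0 < ν + 1)
  have hS := (inv_Gamma_le_tsum_besselITerm hν hz).trans_lt' (by positivity)
  rw [besselI_eq_mul_tsum, log_mul (by positivity) hS.ne', log_rpow (by positivity),
    add_sub_assoc]
  gcongr
  calc log (∑' k, besselITerm ν z k) ≤ log (exp z / Gamma (ν + 1)) :=
        log_le_log hS (tsum_besselITerm_le hν hz)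
    _ = z - log (Gamma (ν + 1)) := by rw [log_div (exp_pos z).ne' hΓ.ne', log_exp]

end

theorem neg_half_le_log_Gamma_nuOf_add_one {p : ℕ} (hp : 2 ≤ p) :
    -(1 / 2) ≤ log (Gamma (nuOf p + 1)) := by
  obtain rfl | rfl | hp4 : p = 2 ∨ p = 3 ∨ 4 ≤ p := by omega
  · norm_num [nuOf]
  · have hΓ : Gamma (nuOf 3 + 1) = √π / 2 := by
      rw [show nuOf 3 = 1 / 2 by norm_num [nuOf], Gamma_add_one (by norm_num), Gamma_one_half_eq]
      ring
    have hπ : 4 / 3 ≤ √π := le_sqrt_of_sq_le (by linarith [pi_gt_three])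
    have := one_sub_inv_le_log_of_pos (by positivity : 0 < √π / 2)
    rw [hΓ, inv_div] at *
    have : 2 / √π ≤ 3 / 2 := by rw [div_le_iff₀ (by positivity)]; linarith
    linarith
  · have h2 : (2 : ℝ) ≤ nuOf p + 1 := by
      have : (4 : ℝ) ≤ p := by exact_mod_cast hp4
      unfold nuOf; linarith
    have := Gamma_strictMonoOn_Ici.monotoneOn (Set.mem_Ici.mpr le_rfl) h2 h2
    rw [Gamma_two] at this
    linarith [log_nonneg this]

theorem sub_one_mul_one_add_log_two_le_max {x : ℝ} (hx : 0 < x) :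
    (x - 1) * (1 + log 2) ≤ max (x + 1) (x * log x) := by
  have hl2 := log_two_lt_d9
  have he := exp_one_lt_d9
  have hlog : x * (1 + log 2) - (2 * exp 1 - x) ≤ x * log x := by
    have h := log_le_sub_one_of_pos (by positivity : 0 < 2 * exp 1 / x)
    rw [log_div (by positivity) hx.ne', log_mul two_ne_zero (exp_pos 1).ne', log_exp] at h
    have h' := mul_le_mul_of_nonneg_left h hx.le
    rw [mul_sub x (2 * exp 1 / x), mul_div_cancel₀ _ hx.ne'] at h'
    linarith
  by_cases hlarge : 2 * exp 1 - (1 + log 2) ≤ x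
  · exact le_max_of_le_right (by linarith)
  · -- below this threshold `(x - 1) log 2 ≤ 2`, as `2e - 2 - log 2 < 2 / log 2`
    refine le_max_of_le_left ?_
    nlinarith [log_pos one_lt_two]

theorem two_mul_sub_one_mul_one_add_log_two_le_max_cHigh_cLow {ν : ℝ} (hν : 0 ≤ ν) :
    (2 * ν - 1) * (1 + log 2) ≤ max (2 * cHigh ν) (2 * cLow ν * log (cLow ν)) :=
  calc (2 * ν - 1) * (1 + log 2) = 2 * ((cLow ν - 1) * (1 + log 2)) := by
        simp only [cLow]; ring
    _ ≤ 2 * max (cLow ν + 1) (cLow ν * log (cLow ν)) := by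
        gcongr
        exact sub_one_mul_one_add_log_two_le_max (by simp only [cLow]; linarith)
    _ = max (2 * cHigh ν) (2 * cLow ν * log (cLow ν)) := by
        rw [mul_max_of_nonneg _ _ zero_le_two, ← mul_assoc]
        simp only [cHigh, cLow]; ring_nf

section

variable {ν κ A : ℝ}

theorem log_besselI_le_mul (hν : 0 ≤ ν) (hκ : 0 < κ) (hL : -(1 / 2) ≤ log (Gamma (ν + 1)))
    (hA : 2 * ν + 2 ≤ A) :
    log (besselI ν κ) ≤ (κ - 1 / 2 * log κ) * A := by
  have hI := log_besselI_le hν hκ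
  rw [log_div hκ.ne' two_ne_zero] at hI
  have hlogκ := log_le_sub_one_of_pos hκ
  have hT : 0 ≤ κ - 1 / 2 * log κ := by linarith
  nlinarith [mul_le_mul_of_nonneg_left hA hT, mul_nonneg hν (log_pos one_lt_two).le,
    mul_le_mul_of_nonneg_left hlogκ hν]

theorem neg_log_besselI_le_mul (hν : 0 ≤ ν) (hκ : 0 < κ) (hA : 2 * ν + 2 ≤ A)
    (hA' : 2 * (ν * log 2 + log (Gamma (ν + 1))) + 2 * ν * (1 + log 2) ≤ (1 + log 2) * A) :
    -log (besselI ν κ) ≤ (κ - 1 / 2 * log κ) * A := by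
  have hI := le_log_besselI hν hκ
  rw [log_div hκ.ne' two_ne_zero] at hI
  have hT : 1 + log 2 ≤ 2 * (κ - 1 / 2 * log κ) := by
    have h := log_le_sub_one_of_pos (by positivity : 0 < 2 * κ)
    rw [log_mul two_ne_zero hκ.ne'] at h
    linarith
  have hl2 := log_pos one_lt_two
  have hT₀ : 0 ≤ κ - 1 / 2 * log κ := by linarith
  have hB : ν * log 2 + log (Gamma (ν + 1)) + 2 * ν * (κ - 1 / 2 * log κ)
      ≤ (κ - 1 / 2 * log κ) * A := by
    rcases le_total (ν * log 2 + log (Gamma (ν + 1))) 0 with hB | hB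
    · nlinarith [mul_le_mul_of_nonneg_left hA hT₀]
    · -- a positive `ν log 2 + log Γ(ν+1)` is absorbed through `2 (κ - log κ / 2) ≥ 1 + log 2`
      refine le_of_mul_le_mul_left ?_ (by positivity : 0 < 1 + log 2)
      nlinarith [mul_le_mul_of_nonneg_left hA' hT₀, mul_le_mul_of_nonneg_right hT hB]
  nlinarith [mul_nonneg hν hκ.le]

end

/-- `|ln(I_ν(κ))|` is bounded by an explicit multiple of `κ − ln(κ)/2`; in
particular `ln(I_ν(κ))` is an `O(κ − ln(κ)/2)` function as `κ → ∞`. -/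
theorem abs_log_besselI_le (p : ℕ) (hp : 2 ≤ p) (κ : ℝ) (hκ : 0 < κ) :
    |Real.log (besselI (nuOf p) κ)|
      ≤ (κ - (1 / 2) * Real.log κ)
          * (1 + (max 1 (2 * nuOf p) * Real.log 2 + 2 * Real.log (Real.Gamma (nuOf p + 1))
              + max (2 * cHigh (nuOf p)) (2 * cLow (nuOf p) * Real.log (cLow (nuOf p))))
            / (1 + Real.log 2)) := by
  have hL := neg_half_le_log_Gamma_nuOf_add_one hp
  set ν := nuOf p
  set K := max (2 * cHigh ν) (2 * cLow ν * log (cLow ν))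
  set C := max 1 (2 * ν) * log 2 + 2 * log (Gamma (ν + 1)) + K
  have hν : 0 ≤ ν := by
    have : (2 : ℝ) ≤ p := by exact_mod_cast hp
    simp only [ν, nuOf]; linarith
  have hD : 0 < 1 + log 2 := by linarith [log_pos one_lt_two]
  have hl2 := log_two_lt_d9
  have hM : 2 * ν * log 2 ≤ max 1 (2 * ν) * log 2 := by gcongr; exact le_max_right _ _
  have hK₁ : 2 * ν + 3 ≤ K := le_max_of_le_left (by simp only [cHigh]; linarith)
  have hK₂ : (2 * ν - 1) * (1 + log 2) ≤ K :=
    two_mul_sub_one_mul_one_add_log_two_le_max_cHigh_cLow hν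
  have hA₁ : 2 * ν + 2 ≤ 1 + C / (1 + log 2) := by
    rw [← sub_le_iff_le_add', le_div_iff₀ hD]
    linarith
  have hA₂ : 2 * (ν * log 2 + log (Gamma (ν + 1))) + 2 * ν * (1 + log 2)
      ≤ (1 + log 2) * (1 + C / (1 + log 2)) := by
    rw [mul_add (1 + log 2) 1, mul_div_cancel₀ _ hD.ne']
    linarith
  exact abs_le.mpr ⟨neg_le.mp (neg_log_besselI_le_mul hν hκ hA₁ hA₂),
    log_besselI_le_mul hν hκ hL hA₁⟩
end
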